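/- Fix b ∈ (0,2) and set η = √(b/(2−b)); let φ(x,y) = (ηx, −η²y). Then for every μ = (a,b,ε₀,ε₁,ε₂) ∈ ℝ⁵ and every (x,y) ∈ ℝ², the pushforward identity Dφ·X_μ(x,y) = η⁻¹·X_{σ(μ)}(φ(x,y)) holds, where Dφ = diag(η, −η²) and σ(a,b,ε₀,ε₁,ε₂) = (a, 2−b, −η³ε₀, ηε₁, −ε₂/η). Explicitly: η·((b−2)/4 + ε₁x + (1−b)y + ax² + ε₂xy + by²) equals η⁻¹ times the first component of X_{σ(μ)} evaluated at (ηx, −η²y), and −η²·(ε₀ − 2xy) equals η⁻¹ times the second component of X_{σ(μ)} evaluated at (ηx, −η²y). -/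

import Mathlib

/-- The quadratic vector field `X_μ` for `μ = (a,b,ε₀,ε₁,ε₂)`, evaluated at `(x,y)`. -/
noncomputable def Xmu (a b e0 e1 e2 x y : ℝ) : ℝ × ℝ :=
  ((b - 2) / 4 + e1 * x + (1 - b) * y + a * x ^ 2 + e2 * (x * y) + b * y ^ 2,
   e0 - 2 * (x * y))

/-! After multiplying through by `η`, both identities are polynomial in `η`, and the only relation
they need is `η² (2 - b) = b`, which is exactly what the choice `η = √(b / (2 - b))` provides. -/

section Rescaling

variable {a b e0 e1 e2 x y η : ℝ}

theorem mul_Xmu_fst_eq_inv_mul_Xmu_fst (hη : η ≠ 0) (hb : η ^ 2 * (2 - b) = b) :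
    η * (Xmu a b e0 e1 e2 x y).1 =
      η⁻¹ * (Xmu a (2 - b) (-η ^ 3 * e0) (η * e1) (-e2 / η) (η * x) (-η ^ 2 * y)).1 := by
  simp only [Xmu]
  field_simp
  linear_combination (-1 - 4 * η ^ 2 * y ^ 2) * hb

theorem neg_sq_mul_Xmu_snd_eq_inv_mul_Xmu_snd (hη : η ≠ 0) :
    -η ^ 2 * (Xmu a b e0 e1 e2 x y).2 =
      η⁻¹ * (Xmu a (2 - b) (-η ^ 3 * e0) (η * e1) (-e2 / η) (η * x) (-η ^ 2 * y)).2 := by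
  simp only [Xmu]
  field_simp
  ring

end Rescaling

/-- for `b ∈ (0,2)`, `η = √(b/(2−b))` and `φ(x,y) = (ηx, −η²y)`, the
pushforward identity `Dφ·X_μ(x,y) = η⁻¹·X_{σ(μ)}(φ(x,y))` holds, where
`σ(a,b,ε₀,ε₁,ε₂) = (a, 2−b, −η³ε₀, ηε₁, −ε₂/η)` and `Dφ = diag(η, −η²)`. -/
theorem stmt_2 (a b e0 e1 e2 x y : ℝ) (hb1 : 0 < b) (hb2 : b < 2) :
    let η := Real.sqrt (b / (2 - b))
    η * (Xmu a b e0 e1 e2 x y).1 =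
      η⁻¹ * (Xmu a (2 - b) (-η ^ 3 * e0) (η * e1) (-e2 / η) (η * x) (-η ^ 2 * y)).1 ∧
    -η ^ 2 * (Xmu a b e0 e1 e2 x y).2 =
      η⁻¹ * (Xmu a (2 - b) (-η ^ 3 * e0) (η * e1) (-e2 / η) (η * x) (-η ^ 2 * y)).2 := by
  intro η
  have hratio : 0 < b / (2 - b) := div_pos hb1 (by linarith)
  have hη : η ≠ 0 := (Real.sqrt_pos.mpr hratio).ne'
  have hb : η ^ 2 * (2 - b) = b := by
    rw [Real.sq_sqrt hratio.le, div_mul_cancel₀ _ (by linarith)]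
  exact ⟨mul_Xmu_fst_eq_inv_mul_Xmu_fst hη hb, neg_sq_mul_Xmu_snd_eq_inv_mul_Xmu_snd hη⟩
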